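/- arXiv:1706.09118 — 4 statements merged into one kernel-verified Lean document; each statement's English description precedes it below -/
import Mathlib

section
/- Any pre-silting object supported in a standard stable tube of rank s is not regular sincere: the union of the regular composition supports of its indecomposable summands cannot be all s quasi-simples. (Combinatorial form: a family of proper cyclic intervals [i_a, j_a] in ℤ/s that covers all of ℤ/s must contain a cyclic chain where each interval's top+1 lies in the next interval's support, forcing silting-incompatibility.) -/
/-- `cycMem s i j b` : `b` lies in the cyclic interval `[i, j]` of `ℤ/s`, i.e. in the regular
composition support of the tube module `M_{ij}`. -/
def cycMem (s : ℕ) (i j b : ZMod s) : Prop :=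
  ∃ t : ℕ, t ≤ (j - i).val ∧ b = i + (t : ZMod s)

/-- a pre-silting object in a stable tube of rank `s` is not regular sincere:
the supports of its summands `M_{ij}[n]` (proper cyclic intervals, by rigidity) cannot cover
all of `ℤ/s`.  The silting-incompatibility of cyclic chains (each top `+1` lying in the
support of the next summand) is the hypothesis `hchain`. -/
theorem stmt4 (s : ℕ) (hs : 2 ≤ s)
    (preSilting : Finset ((ZMod s × ZMod s) × ℤ) → Prop)
    (hrigid : ∀ T, preSilting T → ∀ x ∈ T, ((x.1.2 - x.1.1 : ZMod s)).val ≤ s - 2)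
    (hchain : ∀ T, preSilting T → ∀ k : ℕ, 0 < k →
      ∀ c : ZMod k → (ZMod s × ZMod s) × ℤ, (∀ t, c t ∈ T) →
        ¬ (∀ t : ZMod k, cycMem s (c (t + 1)).1.1 (c (t + 1)).1.2 ((c t).1.2 + 1))) :
    ∀ T, preSilting T → ¬ ∀ b : ZMod s, ∃ x ∈ T, cycMem s x.1.1 x.1.2 b := by
  intro T hT hcov
  classical
  let X := (ZMod s × ZMod s) × ℤ
  -- successor function
  have hnxt : ∀ x : X, ∃ y : X, y ∈ T ∧ cycMem s y.1.1 y.1.2 (x.1.2 + 1) := by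
    intro x
    obtain ⟨y, hy, hc⟩ := hcov (x.1.2 + 1)
    exact ⟨y, hy, hc⟩
  let nxt : X → X := fun x => (hnxt x).choose
  have hnxt_mem : ∀ x, nxt x ∈ T := fun x => ((hnxt x).choose_spec).1
  have hnxt_cyc : ∀ x : X, cycMem s (nxt x).1.1 (nxt x).1.2 (x.1.2 + 1) :=
    fun x => ((hnxt x).choose_spec).2
  obtain ⟨x0, hx0, -⟩ := hcov 0
  let g : ℕ → X := fun n => nxt^[n] x0
  have hg_mem : ∀ n, g n ∈ T := by
    intro n
    induction n with
    | zero => exact hx0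
    | succ n ih =>
      show nxt^[n+1] x0 ∈ T
      rw [Function.iterate_succ_apply']
      exact hnxt_mem _
  have hg_succ : ∀ n, g (n + 1) = nxt (g n) := by
    intro n; exact Function.iterate_succ_apply' nxt n x0
  -- pigeonhole: some repetition
  have hmaps : ∀ n ∈ Finset.range (T.card + 1), g n ∈ T := fun n _ => hg_mem n
  have hcard : T.card < (Finset.range (T.card + 1)).card := by
    simp
  obtain ⟨a, ha, b, hb, hab, heq⟩ :=
    Finset.exists_ne_map_eq_of_card_lt_of_maps_to hcard hmaps
  wlog hlt : a < b generalizing a b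
  · exact this b hb a ha (Ne.symm hab) heq.symm (by omega)
  set k := b - a with hk
  have hk0 : 0 < k := by omega
  -- periodicity from the repetition
  have hadd : ∀ m n : ℕ, g (m + n) = nxt^[n] (g m) := by
    intro m n
    show nxt^[m + n] x0 = nxt^[n] (nxt^[m] x0)
    rw [Nat.add_comm, Function.iterate_add_apply]
  have hper_k : nxt^[k] (g a) = g a := by
    have : g (a + k) = g b := by congr 1; omega
    rw [hadd a k] at this
    rw [this, ← heq]
  have hiter : ∀ q : ℕ, nxt^[k * q] (g a) = g a := by
    intro q
    induction q with
    | zero => simp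
    | succ q ih => rw [Nat.mul_succ, Function.iterate_add_apply, hper_k, ih]
  have hper : ∀ m : ℕ, g (a + m) = g (a + m % k) := by
    intro m
    rw [hadd, hadd]
    conv_lhs => rw [← Nat.mod_add_div m k, Function.iterate_add_apply, hiter]
  haveI : NeZero k := ⟨by omega⟩
  let c : ZMod k → X := fun t => g (a + t.val)
  have hc_mem : ∀ t, c t ∈ T := fun t => hg_mem _
  have hc_succ : ∀ t : ZMod k, c (t + 1) = nxt (c t) := by
    intro t
    show g (a + (t + 1).val) = nxt (g (a + t.val))
    rw [← hg_succ]
    have hv : (t + 1).val = (t.val + 1) % k := by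
      rw [ZMod.val_add, ZMod.val_one_eq_one_mod, Nat.add_mod, Nat.mod_mod_of_dvd,
        ← Nat.add_mod] <;> simp
    rw [hv, ← hper (t.val + 1), Nat.add_assoc]
  refine hchain T hT k hk0 c hc_mem ?_
  intro t
  rw [hc_succ t]
  exact hnxt_cyc (c t)
end

section
/- Let Λ be a representation-infinite tame hereditary algebra and N the sincerity bound (τ^{-k}P and τ^{k+1}P[1] are sincere for all k ≥ N and all projectives P). If M₁ = τ^k P_a and M₂ = τ^ℓ P_b are transjective objects with |k − ℓ| > N, then M₁ and M₂ are silting-incompatible: for all integers i, j, M₁[i] ⊕ M₂[j] is not pre-silting. Hence any two transjective summands of a silting object have transjective degrees differing by at most N. -/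
/-- transjective objects are modelled as pairs `(k, a) = τ^k P_a`; `HomT x y`
(resp. `Ext1T x y`) abbreviates `Hom(x,y) ≠ 0` (resp. `Ext¹(x,y) ≠ 0`), and
`preSilt x i y j` means `x[i] ⊕ y[j]` is pre-silting.  Hypotheses: `hsinc` encodes the
sincerity bound `N` of Brüstle–Dupont–Pérotin together with `Hom(P, sincere) ≠ 0`;
`htau` says `τ` is an autoequivalence; `hAR` is the AR formula `Ext¹(y,x) ≅ D Hom(x, τy)`;
`hpre1`, `hpre2` record how a nonzero `Ext¹` or `Hom` in the right degree kills
pre-silting.  Conclusion: if `|k - ℓ| > N` then `τ^k P_a` and `τ^ℓ P_b` are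
silting-incompatible; hence any two silting-compatible transjective objects have
transjective degrees differing by at most `N`. -/
theorem stmt7 {ι : Type*} (N : ℕ)
    (HomT Ext1T : ℤ × ι → ℤ × ι → Prop)
    (preSilt : ℤ × ι → ℤ → ℤ × ι → ℤ → Prop)
    (hsinc : ∀ (a b : ι) (r : ℤ), r ≤ -(N : ℤ) → HomT (0, a) (r, b))
    (htau : ∀ (a b : ι) (k l t : ℤ), HomT (k, a) (l, b) ↔ HomT (k + t, a) (l + t, b))
    (hAR : ∀ x y : ℤ × ι, Ext1T y x ↔ HomT x (y.1 + 1, y.2))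
    (hpre1 : ∀ (x y : ℤ × ι) (i j : ℤ), i ≤ j → Ext1T y x → ¬ preSilt x i y j)
    (hpre2 : ∀ (x y : ℤ × ι) (i j : ℤ), j < i → HomT x y → ¬ preSilt x i y j)
    (hsymm : ∀ (x y : ℤ × ι) (i j : ℤ), preSilt x i y j ↔ preSilt y j x i) :
    (∀ (a b : ι) (k l : ℤ), (N : ℤ) < |k - l| →
      ∀ i j : ℤ, ¬ preSilt (k, a) i (l, b) j) ∧
    (∀ (a b : ι) (k l i j : ℤ), preSilt (k, a) i (l, b) j → |k - l| ≤ (N : ℤ)) := by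

  -- Hom(τ^k P_a, τ^l P_b) ≠ 0 whenever l - k ≤ -N
  have hhom : ∀ (a b : ι) (k l : ℤ), l - k ≤ -(N : ℤ) → HomT (k, a) (l, b) := by
    intro a b k l h
    have h0 := hsinc a b (l - k) h
    have := (htau a b 0 (l - k) k).mp h0
    simpa using this
  have main : ∀ (a b : ι) (k l : ℤ), (N : ℤ) < k - l →
      ∀ i j : ℤ, ¬ preSilt (k, a) i (l, b) j := by
    intro a b k l h i j hps
    rcases le_or_gt i j with hij | hij
    · have hext : Ext1T (l, b) (k, a) := by
        rw [hAR]
        exact hhom a b k (l + 1) (by linarith)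
      exact hpre1 (k, a) (l, b) i j hij hext hps
    · exact hpre2 (k, a) (l, b) i j hij (hhom a b k l (by linarith)) hps
  have part1 : ∀ (a b : ι) (k l : ℤ), (N : ℤ) < |k - l| →
      ∀ i j : ℤ, ¬ preSilt (k, a) i (l, b) j := by
    intro a b k l h i j hps
    rcases lt_or_ge (N : ℤ) (k - l) with h1 | h1
    · exact main a b k l h1 i j hps
    · have h2 : (N : ℤ) < l - k := by
        rcases abs_cases (k - l) with ⟨he, _⟩ | ⟨he, _⟩ <;> linarith
      exact main b a l k h2 j i ((hsymm _ _ _ _).mp hps)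
  exact ⟨part1, fun a b k l i j hps => by
    by_contra hc
    exact part1 a b k l (lt_of_not_ge hc) i j hps⟩
end

section
/- (Abstract walk lemma.) Let V be a set with a strict partial order <, and let a walk v₀, v₁, …, v_L in V be such that for each step either v_{i+1} < v_i (green) or v_i < v_{i+1} (red), with exactly m red steps. Then for every v ∈ V, the number of indices i with v_i = v is at most m + 1. -/
lemma stmt12_aux {V : Type*} [PartialOrder V]
    {L : ℕ} (walk : Fin (L + 1) → V) (isRed : Fin L → Prop)
    (hstep : ∀ i : Fin L,
      (isRed i → walk i.castSucc < walk i.succ) ∧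
      (¬ isRed i → walk i.succ < walk i.castSucc)) :
    ∀ b a : ℕ, (ha : a < L + 1) → (hb : b < L + 1) → a < b →
      (∀ k, (hk : k < L) → a ≤ k → k < b → ¬ isRed ⟨k, hk⟩) →
      walk ⟨b, hb⟩ < walk ⟨a, ha⟩ := by
  intro b
  induction b with
  | zero => intro a ha hb hab; omega
  | succ c ih =>
    intro a ha hb hab hno
    have hc : c < L := by omega
    have hstepc : walk ⟨c + 1, hb⟩ < walk ⟨c, by omega⟩ :=
      (hstep ⟨c, hc⟩).2 (hno c hc (by omega) (by omega))
    rcases eq_or_lt_of_le (Nat.le_of_lt_succ hab) with h | h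
    · subst h; exact hstepc
    · exact lt_trans hstepc (ih a ha (by omega) h
        (fun k hk h1 h2 => hno k hk h1 (by omega)))

/-- abstract walk lemma: in a set `V` with a strict partial order, a walk
`walk 0, …, walk L` in which each step is either red (`walk i < walk (i+1)`) or green
(`walk (i+1) < walk i`), with exactly `m` red steps, visits each vertex at most `m + 1`
times. -/
theorem stmt12 {V : Type*} [PartialOrder V] [DecidableEq V]
    (m L : ℕ) (walk : Fin (L + 1) → V)
    (isRed : Fin L → Prop) [DecidablePred isRed]
    (hstep : ∀ i : Fin L,
      (isRed i → walk i.castSucc < walk i.succ) ∧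
      (¬ isRed i → walk i.succ < walk i.castSucc))
    (hm : (Finset.univ.filter fun i => isRed i).card = m) :
    ∀ v : V, (Finset.univ.filter fun i : Fin (L + 1) => walk i = v).card ≤ m + 1 := by
  intro v
  set S : Fin (L + 1) → Finset (Fin L) :=
    fun i => Finset.univ.filter fun j : Fin L => isRed j ∧ (j : ℕ) < (i : ℕ) with hS
  set f : Fin (L + 1) → ℕ := fun i => (S i).card with hf
  have hmono : ∀ i j : Fin (L + 1), (i : ℕ) ≤ (j : ℕ) → S i ⊆ S j := by
    intro i j hij k hk
    simp only [hS, Finset.mem_filter] at hk ⊢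
    exact ⟨hk.1, hk.2.1, lt_of_lt_of_le hk.2.2 hij⟩
  have hfm : ∀ i, f i ≤ m := by
    intro i
    rw [← hm]
    apply Finset.card_le_card
    intro k hk
    simp only [hS, Finset.mem_filter] at hk ⊢
    exact ⟨hk.1, hk.2.1⟩
  have key : ∀ i ∈ Finset.univ.filter fun i : Fin (L + 1) => walk i = v,
      f i ∈ Finset.range (m + 1) := by
    intro i _; simp [Nat.lt_succ_iff, hfm i]
  have hinj : Set.InjOn f (Finset.univ.filter fun i : Fin (L + 1) => walk i = v) := by
    intro i hi j hj hfij
    simp only [Finset.coe_filter, Set.mem_setOf_eq, Finset.mem_univ, true_and] at hi hj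
    by_contra hne
    wlog hij : (i : ℕ) < (j : ℕ) generalizing i j
    · have hv : (i : ℕ) ≠ (j : ℕ) := fun h => hne (Fin.ext h)
      exact this hfij.symm hj hi (Ne.symm hne) (by omega)
    have hSeq : S i = S j :=
      Finset.eq_of_subset_of_card_le (hmono i j hij.le) (le_of_eq hfij.symm)
    have hno : ∀ k, (hk : k < L) → (i : ℕ) ≤ k → k < (j : ℕ) → ¬ isRed ⟨k, hk⟩ := by
      intro k hk h1 h2 hred
      have : (⟨k, hk⟩ : Fin L) ∈ S j := by
        simp only [hS, Finset.mem_filter]; exact ⟨Finset.mem_univ _, hred, h2⟩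
      rw [← hSeq] at this
      simp only [hS, Finset.mem_filter] at this
      omega
    have := stmt12_aux walk isRed hstep (j : ℕ) (i : ℕ) i.isLt j.isLt hij hno
    rw [show (⟨(j : ℕ), j.isLt⟩ : Fin (L+1)) = j from rfl,
        show (⟨(i : ℕ), i.isLt⟩ : Fin (L+1)) = i from rfl, hi, hj] at this
    exact lt_irrefl v this
  calc (Finset.univ.filter fun i : Fin (L + 1) => walk i = v).card
      ≤ (Finset.range (m + 1)).card := Finset.card_le_card_of_injOn f key hinj
    _ = m + 1 := Finset.card_range _
end

section
/- If for all k ≥ N the modules τ^{−k}P and τ^{k+1}P[1] are sincere for every projective P (sincerity bound N), and k − ℓ > N, then Hom(P_a, τ^{ℓ−k+1}P_b) ≠ 0 and Hom(P_a, τ^{ℓ−k}P_b) ≠ 0; consequently Ext¹(τ^ℓ P_b, τ^k P_a) ≠ 0 and Hom(τ^k P_a, τ^ℓ P_b) ≠ 0, so τ^k P_a[i] ⊕ τ^ℓ P_b[j] is not pre-silting for any integers i, j. -/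
/-- transjective objects are pairs `(k, a) = τ^k P_a`; `HomT`/`Ext1T` record
nonvanishing of Hom/Ext¹ and `preSilt x i y j` means `x[i] ⊕ y[j]` is pre-silting.  Given
the sincerity bound `N` (`hsinc`: `Hom(P_a, τ^r P_b) ≠ 0` for `r ≤ -N`, since `τ^{-k}P` and
`τ^{k+1}P[1]` are sincere for `k ≥ N` and `Hom(P, sincere) ≠ 0`), `τ`-equivariance of Hom
(`htau`), the AR formula (`hAR`), and the pre-silting obstructions (`hpre1`, `hpre2`):
if `k - ℓ > N` then `Hom(P_a, τ^{ℓ-k+1}P_b) ≠ 0` and `Hom(P_a, τ^{ℓ-k}P_b) ≠ 0`, hence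
`Ext¹(τ^ℓ P_b, τ^k P_a) ≠ 0` and `Hom(τ^k P_a, τ^ℓ P_b) ≠ 0`, so
`τ^k P_a[i] ⊕ τ^ℓ P_b[j]` is not pre-silting for any integers `i, j`. -/
theorem stmt18 {ι : Type*} (N : ℕ)
    (HomT Ext1T : ℤ × ι → ℤ × ι → Prop)
    (preSilt : ℤ × ι → ℤ → ℤ × ι → ℤ → Prop)
    (hsinc : ∀ (a b : ι) (r : ℤ), r ≤ -(N : ℤ) → HomT (0, a) (r, b))
    (htau : ∀ (a b : ι) (k l t : ℤ), HomT (k, a) (l, b) ↔ HomT (k + t, a) (l + t, b))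
    (hAR : ∀ x y : ℤ × ι, Ext1T y x ↔ HomT x (y.1 + 1, y.2))
    (hpre1 : ∀ (x y : ℤ × ι) (i j : ℤ), i ≤ j → Ext1T y x → ¬ preSilt x i y j)
    (hpre2 : ∀ (x y : ℤ × ι) (i j : ℤ), j < i → HomT x y → ¬ preSilt x i y j) :
    ∀ (a b : ι) (k l : ℤ), (N : ℤ) < k - l →
      HomT (0, a) (l - k + 1, b) ∧ HomT (0, a) (l - k, b) ∧
      Ext1T (l, b) (k, a) ∧ HomT (k, a) (l, b) ∧
      ∀ i j : ℤ, ¬ preSilt (k, a) i (l, b) j := by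
  intro a b k l hkl
  have h1 : HomT (0, a) (l - k + 1, b) := hsinc a b _ (by omega)
  have h2 : HomT (0, a) (l - k, b) := hsinc a b _ (by omega)
  have h3 : Ext1T (l, b) (k, a) := by
    rw [hAR]
    have := (htau a b 0 (l - k + 1) k).mp h1
    have e : l - k + 1 + k = l + 1 := by ring
    rwa [zero_add, e] at this
  have h4 : HomT (k, a) (l, b) := by
    have := (htau a b 0 (l - k) k).mp h2
    have e : l - k + k = l := by ring
    rwa [zero_add, e] at this
  refine ⟨h1, h2, h3, h4, ?_⟩
  intro i j
  rcases le_or_gt i j with h | h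
  · exact hpre1 _ _ _ _ h h3
  · exact hpre2 _ _ _ _ h h4
end
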